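/- arXiv:math/9302205 — 7 statements merged into one kernel-verified Lean document; each statement's English description precedes it below -/
import Mathlib

section
/- Let X be a vector space and (Gₙ) a sequence of subsets of X with [-1,1]·Gₙ ⊆ Gₙ. For each n define Fₙ as the (2^{i-n})-sum of the sets Gᵢ for i ≥ n, i.e., the set of all finite sums r₁z₁ + r₂z₂ + ⋯ with |rⱼ| ≤ 1 where at most 2^{i-n} of the elements zⱼ lie in Gᵢ for each i ≥ n. Then [-1,1]·Fₙ ⊆ Fₙ and F_{n+1} + F_{n+1} ⊆ Fₙ for all n. -/
/-- The `(nᵢ)`-sum of a family of sets `(Gᵢ)` of a vector space: all finite sums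
`∑ rⱼ • zⱼ` with `|rⱼ| ≤ 1`, where each `zⱼ` lies in some `G (idx j)` and for each `i`
at most `n i` of the `zⱼ`'s lie in `Gᵢ`. -/
def nSum {X : Type*} [AddCommGroup X] [Module ℝ X]
    (G : ℕ → Set X) (n : ℕ → ℕ) : Set X :=
  { x | ∃ (k : ℕ) (r : Fin k → ℝ) (z : Fin k → X) (idx : Fin k → ℕ),
      (∀ j, |r j| ≤ 1) ∧ (∀ j, z j ∈ G (idx j)) ∧
      (∀ i, (Finset.univ.filter (fun j => idx j = i)).card ≤ n i) ∧
      x = ∑ j, r j • z j }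

theorem nSum_balanced_and_additive
    {X : Type*} [AddCommGroup X] [Module ℝ X]
    (G : ℕ → Set X)
    (hGbal : ∀ i, ∀ c : ℝ, |c| ≤ 1 → ∀ x ∈ G i, c • x ∈ G i)
    (F : ℕ → Set X)
    -- `F n` is the `(2^{i-n})`-sum of the sets `Gᵢ`, `i ≥ n`
    (hF : ∀ n, F n = nSum (fun i => G (n + i)) (fun i => 2 ^ i)) :
    (∀ n, ∀ c : ℝ, |c| ≤ 1 → ∀ x ∈ F n, c • x ∈ F n) ∧
    (∀ n, ∀ x ∈ F (n + 1), ∀ y ∈ F (n + 1), x + y ∈ F n) := by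
  constructor
  · intro n c hc x hx
    rw [hF] at hx ⊢
    obtain ⟨k, r, z, idx, hr, hz, hcard, rfl⟩ := hx
    refine ⟨k, fun j => c * r j, z, idx, ?_, hz, hcard, ?_⟩
    · intro j
      calc |c * r j| = |c| * |r j| := abs_mul c (r j)
        _ ≤ 1 * 1 := mul_le_mul hc (hr j) (abs_nonneg _) (le_trans (abs_nonneg c) hc)
        _ = 1 := one_mul 1
    · rw [Finset.smul_sum]
      exact Finset.sum_congr rfl fun j _ => by simp [smul_smul]
  · intro n x hx y hy
    rw [hF] at hx hy ⊢
    obtain ⟨k₁, r₁, z₁, idx₁, hr₁, hz₁, hc₁, rfl⟩ := hx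
    obtain ⟨k₂, r₂, z₂, idx₂, hr₂, hz₂, hc₂, rfl⟩ := hy
    refine ⟨k₁ + k₂, Fin.append r₁ r₂, Fin.append z₁ z₂,
      Fin.append (fun j => idx₁ j + 1) (fun j => idx₂ j + 1), ?_, ?_, ?_, ?_⟩
    · intro j
      refine Fin.addCases (fun i => ?_) (fun i => ?_) j
      · rw [Fin.append_left]; exact hr₁ i
      · rw [Fin.append_right]; exact hr₂ i
    · intro j
      refine Fin.addCases (fun i => ?_) (fun i => ?_) j
      · rw [Fin.append_left, Fin.append_left]
        show z₁ i ∈ G (n + (idx₁ i + 1))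
        have : n + (idx₁ i + 1) = n + 1 + idx₁ i := by omega
        rw [this]; exact hz₁ i
      · rw [Fin.append_right, Fin.append_right]
        show z₂ i ∈ G (n + (idx₂ i + 1))
        have : n + (idx₂ i + 1) = n + 1 + idx₂ i := by omega
        rw [this]; exact hz₂ i
    · intro i
      match i with
      | 0 =>
        have : (Finset.univ.filter
            (fun j => Fin.append (fun j => idx₁ j + 1) (fun j => idx₂ j + 1) j = 0)) = ∅ := by
          apply Finset.filter_eq_empty_iff.mpr
          intro j _
          refine Fin.addCases (fun i => ?_) (fun i => ?_) j
          · rw [Fin.append_left]; omega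
          · rw [Fin.append_right]; omega
        rw [this]; simp
      | (i + 1) =>
        have key : (Finset.univ.filter
            (fun j => Fin.append (fun j => idx₁ j + 1) (fun j => idx₂ j + 1) j = i + 1)).card
            = (Finset.univ.filter (fun j => idx₁ j = i)).card
            + (Finset.univ.filter (fun j => idx₂ j = i)).card := by
          rw [Finset.card_filter, Finset.card_filter, Finset.card_filter, Fin.sum_univ_add]
          congr 1
          · exact Finset.sum_congr rfl fun j _ => by rw [Fin.append_left]; simp
          · exact Finset.sum_congr rfl fun j _ => by rw [Fin.append_right]; simp
        rw [key]
        show _ ≤ 2 ^ (i + 1)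
        rw [pow_succ]
        have h1 := hc₁ i
        have h2 := hc₂ i
        simp only at h1 h2 ⊢
        omega
    · rw [Fin.sum_univ_add]
      congr 1
      · exact Finset.sum_congr rfl fun j _ => by rw [Fin.append_left, Fin.append_left]
      · exact Finset.sum_congr rfl fun j _ => by rw [Fin.append_right, Fin.append_right]
end

section
/- Let F be a quasi-linear map on a normed space E and X_F = ℝ × E with quasi-norm ‖(r,x)‖ = |r - F(x)| + ‖x‖. Suppose ν is a nearly convex vector topology on ℝ × E weaker than the quasi-norm topology, and suppose ℝ × {0} is not complemented in X_F. Then every ν-neighborhood U of 0 contains a set of the form {(r,x) : ‖x‖ < ε} for some ε > 0. -/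
/-!
A ν-continuous functional that does not vanish on `ℝ × {0}` is also τ-continuous, and dividing by
its value at `(1, 0)` turns it into a τ-continuous projection onto `ℝ × {0}`. Near convexity
therefore puts `ℝ × {0}` inside the ν-closure of `{0}`, i.e. inside every ν-neighbourhood of `0`.
Given `U`, pick a ν-neighbourhood `V` of `0` with `V + V ⊆ U`; it is also a τ-neighbourhood, and
`(r, x) = (r - F x, 0) + (F x, x)` with `‖(F x, x)‖_F = ‖x‖` puts the tube `‖x‖ < ε` into `U`.
-/

open Topology

namespace ContinuousLinearMap

variable {𝕜 M : Type*} [Field 𝕜] [TopologicalSpace 𝕜] [AddCommGroup M] [Module 𝕜 M]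
  [TopologicalSpace M] [ContinuousSMul 𝕜 M]

theorem exists_idempotent_range_eq_span_singleton (f : M →L[𝕜] 𝕜) {v : M} (hv : f v ≠ 0) :
    ∃ P : M →L[𝕜] M, (∀ w, P (P w) = P w) ∧ LinearMap.range (P : M →ₗ[𝕜] M) = 𝕜 ∙ v := by
  have hf : f ≠ 0 := fun h => hv (by simp [h])
  refine ⟨f.smulRight ((f v)⁻¹ • v), fun w => ?_, ?_⟩
  · simp [smul_smul, mul_inv_cancel₀ hv]
  · rw [range_smulRight_apply hf, Submodule.span_singleton_smul_eq (inv_ne_zero hv).isUnit]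

end ContinuousLinearMap

theorem Submodule.prod_top_bot_eq_span_singleton (𝕜 E : Type*) [Field 𝕜] [AddCommGroup E]
    [Module 𝕜 E] :
    (⊤ : Submodule 𝕜 𝕜).prod (⊥ : Submodule 𝕜 E) = 𝕜 ∙ ((1 : 𝕜), (0 : E)) := by
  ext ⟨r, x⟩
  simp [Submodule.mem_span_singleton, Prod.ext_iff, eq_comm]

theorem span_singleton_subset_closure_zero_of_not_exists_projection
    {𝕜 M : Type*} [Field 𝕜] [TopologicalSpace 𝕜] [AddCommGroup M] [Module 𝕜 M]
    {τ ν : TopologicalSpace M} [@ContinuousSMul 𝕜 M _ _ τ] (hle : τ ≤ ν)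
    (hnc : ∀ p ∉ closure[ν] {0}, ∃ f : M →ₗ[𝕜] 𝕜, Continuous[ν, _] f ∧ f p ≠ 0) {v : M}
    (hv : ¬ ∃ P : M →ₗ[𝕜] M, Continuous[τ, τ] P ∧ (∀ w, P (P w) = P w) ∧
      LinearMap.range P = 𝕜 ∙ v) :
    ((𝕜 ∙ v : Submodule 𝕜 M) : Set M) ⊆ closure[ν] {0} := by
  intro p hp
  obtain ⟨c, rfl⟩ := Submodule.mem_span_singleton.mp hp
  by_contra hcv
  obtain ⟨f, hfν, hfcv⟩ := hnc _ hcv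
  let _ : TopologicalSpace M := τ
  have hfv : f v ≠ 0 := fun h => hfcv (by simp [h])
  obtain ⟨P, hidem, hrange⟩ := ContinuousLinearMap.exists_idempotent_range_eq_span_singleton
    ⟨f, continuous_le_dom hle hfν⟩ hfv
  exact hv ⟨P, P.continuous, hidem, hrange⟩

theorem nearly_convex_weaker_topology_contains_tube_general
    {E : Type*} [NormedAddCommGroup E] [NormedSpace ℝ E]
    (F : E → ℝ)
    -- τ is the quasi-norm topology of ‖(r,x)‖_F = |r - F x| + ‖x‖ :
    (τ : TopologicalSpace (ℝ × E))
    (hτsmul : @ContinuousSMul ℝ (ℝ × E) _ _ τ)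
    (hτbasis : (@nhds (ℝ × E) τ 0).HasBasis (fun ε : ℝ => 0 < ε)
      (fun ε => {p : ℝ × E | |p.1 - F p.2| + ‖p.2‖ < ε}))
    -- ν is a nearly convex vector topology weaker than τ :
    (ν : TopologicalSpace (ℝ × E))
    (hνadd : @IsTopologicalAddGroup (ℝ × E) ν _)
    (hweaker : τ ≤ ν)
    (hnc : ∀ p : ℝ × E, p ∉ @closure (ℝ × E) ν {0} →
      ∃ f : (ℝ × E) →ₗ[ℝ] ℝ, @Continuous (ℝ × E) ℝ ν _ f ∧ f p ≠ 0)
    -- ℝ × {0} is not complemented in X_F :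
    (hnotcompl : ¬ ∃ P : (ℝ × E) →ₗ[ℝ] (ℝ × E),
        @Continuous (ℝ × E) (ℝ × E) τ τ P ∧ (∀ w, P (P w) = P w) ∧
        LinearMap.range P = (⊤ : Submodule ℝ ℝ).prod (⊥ : Submodule ℝ E)) :
    ∀ U ∈ @nhds (ℝ × E) ν 0, ∃ ε > 0, {p : ℝ × E | ‖p.2‖ < ε} ⊆ U := by
  intro U hU
  rw [Submodule.prod_top_bot_eq_span_singleton] at hnotcompl
  have hline := span_singleton_subset_closure_zero_of_not_exists_projection hweaker hnc hnotcompl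
  let _ : TopologicalSpace (ℝ × E) := ν
  obtain ⟨V, hV, hVU⟩ := exists_nhds_zero_half hU
  obtain ⟨ε, hε, hball⟩ := hτbasis.mem_iff.mp (nhds_mono hweaker hV)
  refine ⟨ε, hε, fun ⟨r, x⟩ hx => ?_⟩
  have hgraph : (F x, x) ∈ V := hball (by simpa using hx)
  have hfiber : (r - F x, (0 : E)) ∈ V := by
    have hr : (r - F x, (0 : E)) ∈ closure {0} :=
      hline (by simp [← Submodule.prod_top_bot_eq_span_singleton])
    rw [R0Space.closure_singleton] at hr
    exact Filter.mem_ker.mp hr V hV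
  simpa using hVU _ hfiber _ hgraph

theorem nearly_convex_weaker_topology_contains_tube
    {E : Type*} [NormedAddCommGroup E] [NormedSpace ℝ E]
    (F : E → ℝ) (C : ℝ)
    (hhom : ∀ (r : ℝ) (x : E), F (r • x) = r * F x)
    (hq : ∀ x y : E, |F (x + y) - F x - F y| ≤ C * (‖x‖ + ‖y‖))
    -- τ is the quasi-norm topology of ‖(r,x)‖_F = |r - F x| + ‖x‖ :
    (τ : TopologicalSpace (ℝ × E))
    (hτadd : @IsTopologicalAddGroup (ℝ × E) τ _)
    (hτsmul : @ContinuousSMul ℝ (ℝ × E) _ _ τ)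
    (hτbasis : (@nhds (ℝ × E) τ 0).HasBasis (fun ε : ℝ => 0 < ε)
      (fun ε => {p : ℝ × E | |p.1 - F p.2| + ‖p.2‖ < ε}))
    -- ν is a nearly convex vector topology weaker than τ :
    (ν : TopologicalSpace (ℝ × E))
    (hνadd : @IsTopologicalAddGroup (ℝ × E) ν _)
    (hνsmul : @ContinuousSMul ℝ (ℝ × E) _ _ ν)
    (hweaker : τ ≤ ν)
    (hnc : ∀ p : ℝ × E, p ∉ @closure (ℝ × E) ν {0} →
      ∃ f : (ℝ × E) →ₗ[ℝ] ℝ, @Continuous (ℝ × E) ℝ ν _ f ∧ f p ≠ 0)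
    -- ℝ × {0} is not complemented in X_F :
    (hnotcompl : ¬ ∃ P : (ℝ × E) →ₗ[ℝ] (ℝ × E),
        @Continuous (ℝ × E) (ℝ × E) τ τ P ∧ (∀ w, P (P w) = P w) ∧
        LinearMap.range P = (⊤ : Submodule ℝ ℝ).prod (⊥ : Submodule ℝ E)) :
    ∀ U ∈ @nhds (ℝ × E) ν 0, ∃ ε > 0, {p : ℝ × E | ‖p.2‖ < ε} ⊆ U :=
  nearly_convex_weaker_topology_contains_tube_general F τ hτsmul hτbasis ν hνadd hweaker hnc
    hnotcompl
end

section
/- Let F be a quasi-linear map on a normed space E and X_F = ℝ × E with quasi-norm ‖(r,x)‖ = |r - F(x)| + ‖x‖. The sets {(r,x) : ‖x‖ < ε}, ε > 0, form a neighborhood base at 0 for a nearly convex vector topology on ℝ × E which is weaker than the quasi-norm topology, and the closure of {0} in this topology equals ℝ × {0}. -/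
open Filter Topology

/-!
The tube topology is the topology induced on `ℝ × E` by the projection `(r, x) ↦ x`, so it
inherits from `E` a vector topology whose neighbourhoods of `0` are the tubes. Its closure of
`{0}` is the kernel `ℝ × {0}` of the projection, and a point outside it has nonzero second
coordinate, which Hahn–Banach separates from `0` by a functional on `E`. The quasi-norm topology
is finer because `‖x‖ ≤ |r - F x| + ‖x‖`.
-/

abbrev tubeTopology (R E : Type*) [TopologicalSpace E] : TopologicalSpace (R × E) :=
  .induced Prod.snd ‹_›

theorem isInducing_snd_tubeTopology (R E : Type*) [TopologicalSpace E] :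
    @IsInducing (R × E) E (tubeTopology R E) _ Prod.snd :=
  @IsInducing.mk _ _ (tubeTopology R E) _ _ rfl

theorem isTopologicalAddGroup_tubeTopology (R E : Type*) [AddGroup R] [AddGroup E]
    [TopologicalSpace E] [IsTopologicalAddGroup E] :
    @IsTopologicalAddGroup (R × E) (tubeTopology R E) _ :=
  topologicalAddGroup_induced (AddMonoidHom.snd R E)

theorem continuousSMul_tubeTopology (𝕜 R E : Type*) [TopologicalSpace 𝕜] [SMul 𝕜 R] [SMul 𝕜 E]
    [TopologicalSpace E] [ContinuousSMul 𝕜 E] :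
    @ContinuousSMul 𝕜 (R × E) _ _ (tubeTopology R E) :=
  letI := tubeTopology R E
  (isInducing_snd_tubeTopology R E).continuousSMul (f := id) continuous_id rfl

theorem nhds_zero_tubeTopology_hasBasis (R E : Type*) [Zero R] [SeminormedAddGroup E] :
    (@nhds (R × E) (tubeTopology R E) 0).HasBasis (fun ε : ℝ => 0 < ε)
      (fun ε => {p : R × E | ‖p.2‖ < ε}) := by
  rw [tubeTopology, nhds_induced]
  exact (Metric.nhds_basis_ball.comap Prod.snd).congr (fun _ => Iff.rfl)
    (fun _ _ => by ext; simp)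

theorem closure_zero_tubeTopology (R E : Type*) [Zero R] [Zero E] [TopologicalSpace E]
    [T1Space E] : @closure (R × E) (tubeTopology R E) {0} = {p : R × E | p.2 = 0} := by
  ext p
  rw [tubeTopology, closure_induced, Set.image_singleton, Prod.snd_zero, closure_singleton]
  rfl

theorem le_tubeTopology {R E : Type*} [AddGroup R] [AddGroup E] [TopologicalSpace E]
    [IsTopologicalAddGroup E] (τ : TopologicalSpace (R × E))
    (hτ : @IsTopologicalAddGroup (R × E) τ _)
    (hsnd : Tendsto Prod.snd (@nhds (R × E) τ 0) (𝓝 0)) : τ ≤ tubeTopology R E := by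
  rw [tubeTopology, ← continuous_iff_le_induced]
  exact continuous_of_continuousAt_zero (AddMonoidHom.snd R E) hsnd

theorem exists_continuous_linearMap_tubeTopology_ne_zero {𝕜 R E : Type*} [Ring 𝕜]
    [TopologicalSpace 𝕜] [AddCommGroup R] [Module 𝕜 R] [AddCommGroup E] [TopologicalSpace E]
    [Module 𝕜 E] [SeparatingDual 𝕜 E] {p : R × E} (hp : p.2 ≠ 0) :
    ∃ f : (R × E) →ₗ[𝕜] 𝕜, @Continuous (R × E) 𝕜 (tubeTopology R E) _ f ∧ f p ≠ 0 := by
  let := tubeTopology R E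
  obtain ⟨g, hg⟩ := SeparatingDual.exists_ne_zero (R := 𝕜) hp
  exact ⟨g.toLinearMap.comp (LinearMap.snd 𝕜 R E),
    g.continuous.comp (isInducing_snd_tubeTopology R E).continuous, hg⟩

theorem tube_base_nearly_convex_topology_general
    {E : Type*} [NormedAddCommGroup E] [NormedSpace ℝ E]
    (F : E → ℝ)
    -- τ is the quasi-norm topology of ‖(r,x)‖_F = |r - F x| + ‖x‖ :
    (τ : TopologicalSpace (ℝ × E))
    (hτadd : @IsTopologicalAddGroup (ℝ × E) τ _)
    (hτbasis : (@nhds (ℝ × E) τ 0).HasBasis (fun ε : ℝ => 0 < ε)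
      (fun ε => {p : ℝ × E | |p.1 - F p.2| + ‖p.2‖ < ε})) :
    ∃ ν : TopologicalSpace (ℝ × E),
      @IsTopologicalAddGroup (ℝ × E) ν _ ∧
      @ContinuousSMul ℝ (ℝ × E) _ _ ν ∧
      -- the tubes {(r,x) : ‖x‖ < ε} are a neighborhood base at 0 for ν :
      (@nhds (ℝ × E) ν 0).HasBasis (fun ε : ℝ => 0 < ε)
        (fun ε => {p : ℝ × E | ‖p.2‖ < ε}) ∧
      -- ν is weaker than the quasi-norm topology :
      τ ≤ ν ∧
      -- ν is nearly convex :
      (∀ p : ℝ × E, p ∉ @closure (ℝ × E) ν {0} →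
        ∃ f : (ℝ × E) →ₗ[ℝ] ℝ, @Continuous (ℝ × E) ℝ ν _ f ∧ f p ≠ 0) ∧
      -- the ν-closure of {0} is ℝ × {0} :
      @closure (ℝ × E) ν {0} = {p : ℝ × E | p.2 = 0} := by
  have hsnd : Tendsto Prod.snd (@nhds (ℝ × E) τ 0) (𝓝 0) :=
    hτbasis.tendsto_iff Metric.nhds_basis_ball |>.2 fun ε hε =>
      ⟨ε, hε, fun p hp => by
        simpa using (le_add_of_nonneg_left (abs_nonneg _)).trans_lt hp⟩
  refine ⟨tubeTopology ℝ E, isTopologicalAddGroup_tubeTopology ℝ E,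
    continuousSMul_tubeTopology ℝ ℝ E, nhds_zero_tubeTopology_hasBasis ℝ E,
    le_tubeTopology τ hτadd hsnd, fun p hp => ?_, closure_zero_tubeTopology ℝ E⟩
  rw [closure_zero_tubeTopology] at hp
  exact exists_continuous_linearMap_tubeTopology_ne_zero hp

theorem tube_base_nearly_convex_topology
    {E : Type*} [NormedAddCommGroup E] [NormedSpace ℝ E]
    (F : E → ℝ) (C : ℝ)
    (hhom : ∀ (r : ℝ) (x : E), F (r • x) = r * F x)
    (hq : ∀ x y : E, |F (x + y) - F x - F y| ≤ C * (‖x‖ + ‖y‖))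
    -- τ is the quasi-norm topology of ‖(r,x)‖_F = |r - F x| + ‖x‖ :
    (τ : TopologicalSpace (ℝ × E))
    (hτadd : @IsTopologicalAddGroup (ℝ × E) τ _)
    (hτsmul : @ContinuousSMul ℝ (ℝ × E) _ _ τ)
    (hτbasis : (@nhds (ℝ × E) τ 0).HasBasis (fun ε : ℝ => 0 < ε)
      (fun ε => {p : ℝ × E | |p.1 - F p.2| + ‖p.2‖ < ε})) :
    ∃ ν : TopologicalSpace (ℝ × E),
      @IsTopologicalAddGroup (ℝ × E) ν _ ∧
      @ContinuousSMul ℝ (ℝ × E) _ _ ν ∧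
      -- the tubes {(r,x) : ‖x‖ < ε} are a neighborhood base at 0 for ν :
      (@nhds (ℝ × E) ν 0).HasBasis (fun ε : ℝ => 0 < ε)
        (fun ε => {p : ℝ × E | ‖p.2‖ < ε}) ∧
      -- ν is weaker than the quasi-norm topology :
      τ ≤ ν ∧
      -- ν is nearly convex :
      (∀ p : ℝ × E, p ∉ @closure (ℝ × E) ν {0} →
        ∃ f : (ℝ × E) →ₗ[ℝ] ℝ, @Continuous (ℝ × E) ℝ ν _ f ∧ f p ≠ 0) ∧
      -- the ν-closure of {0} is ℝ × {0} :
      @closure (ℝ × E) ν {0} = {p : ℝ × E | p.2 = 0} :=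
  tube_base_nearly_convex_topology_general F τ hτadd hτbasis
end

section
/- The Ribe function F₀(x) = ∑ᵢ xᵢ ln|xᵢ| − (∑ᵢ xᵢ) ln|∑ᵢ xᵢ| (with the convention 0·ln 0 = 0), defined on the space ℓ₁⁰ of finitely supported real sequences with the ℓ₁ norm, is quasi-linear: F₀(rx) = rF₀(x) for all r ∈ ℝ, and there is a constant C such that |F₀(x+y) − F₀(x) − F₀(y)| ≤ C(‖x‖₁ + ‖y‖₁) for all x, y ∈ ℓ₁⁰. -/
/-- The Ribe function on finitely supported real sequences,
with the convention `0 * log 0 = 0` (note `Real.log 0 = 0`). -/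
noncomputable def ribe (x : ℕ →₀ ℝ) : ℝ :=
  (∑ i ∈ x.support, x i * Real.log |x i|) -
    (∑ i ∈ x.support, x i) * Real.log |∑ i ∈ x.support, x i|

/-!
Write `φ(t) = t log |t|`, so that `ribe x = ∑ φ(xᵢ) - φ(∑ xᵢ)`. Since
`φ(r t) = r φ(t) + (r log |r|) t`, the function `φ` is homogeneous up to a linear error, and linear
errors cancel in `ribe`; this gives homogeneity. For quasi-additivity, the same scaling law shows that
the defect `φ(a + b) - φ(a) - φ(b)` is homogeneous, so it suffices to bound it when `|a| + |b| = 1`,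
where `|φ| ≤ 1` at each of the three arguments. Summing the defect over the coordinates, and adding
it once more for the total sums, gives the constant `6`.
-/

open Finset

noncomputable def mulLogAbs (t : ℝ) : ℝ := t * Real.log |t|

lemma mulLogAbs_mul (r t : ℝ) :
    mulLogAbs (r * t) = r * mulLogAbs t + r * t * Real.log |r| := by
  rcases eq_or_ne r 0 with rfl | hr
  · simp [mulLogAbs]
  rcases eq_or_ne t 0 with rfl | ht
  · simp [mulLogAbs]
  rw [mulLogAbs, mulLogAbs, abs_mul, Real.log_mul (abs_ne_zero.2 hr) (abs_ne_zero.2 ht)]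
  ring

lemma abs_mulLogAbs_le_one {t : ℝ} (ht : |t| ≤ 1) : |mulLogAbs t| ≤ 1 := by
  rcases eq_or_ne t 0 with rfl | ht₀
  · simp [mulLogAbs]
  have h := Real.abs_log_mul_self_lt |t| (abs_pos.2 ht₀) ht
  rw [abs_mul, abs_abs] at h
  rw [mulLogAbs, abs_mul, mul_comm]
  exact h.le

lemma mulLogAbs_add_sub_sub_mul (r a b : ℝ) :
    mulLogAbs (r * a + r * b) - mulLogAbs (r * a) - mulLogAbs (r * b) =
      r * (mulLogAbs (a + b) - mulLogAbs a - mulLogAbs b) := by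
  rw [← mul_add, mulLogAbs_mul, mulLogAbs_mul, mulLogAbs_mul]
  ring

lemma abs_mulLogAbs_add_sub_sub_le (a b : ℝ) :
    |mulLogAbs (a + b) - mulLogAbs a - mulLogAbs b| ≤ 3 * (|a| + |b|) := by
  rcases (add_nonneg (abs_nonneg a) (abs_nonneg b)).eq_or_lt with hs | hs
  · obtain ⟨rfl, rfl⟩ : a = 0 ∧ b = 0 := by
      constructor <;> apply abs_eq_zero.mp <;> linarith [abs_nonneg a, abs_nonneg b]
    simp [mulLogAbs]
  set s := |a| + |b|
  have hunit : |a / s| + |b / s| = 1 := by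
    rw [abs_div, abs_div, abs_of_pos hs, ← add_div, div_self hs.ne']
  have hsum : |a / s + b / s| ≤ 1 := (abs_add_le _ _).trans hunit.le
  have ha : |a / s| ≤ 1 := by linarith [abs_nonneg (b / s)]
  have hb : |b / s| ≤ 1 := by linarith [abs_nonneg (a / s)]
  calc |mulLogAbs (a + b) - mulLogAbs a - mulLogAbs b|
      = s * |mulLogAbs (a / s + b / s) - mulLogAbs (a / s) - mulLogAbs (b / s)| := by
        rw [← abs_of_pos hs, ← abs_mul, ← mulLogAbs_add_sub_sub_mul, abs_of_pos hs,
          mul_div_cancel₀ _ hs.ne', mul_div_cancel₀ _ hs.ne']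
    _ ≤ s * (1 + 1 + 1) := by
        gcongr
        refine (abs_sub _ _).trans (add_le_add ((abs_sub _ _).trans (add_le_add ?_ ?_)) ?_)
        exacts [abs_mulLogAbs_le_one hsum, abs_mulLogAbs_le_one ha, abs_mulLogAbs_le_one hb]
    _ = 3 * s := by ring

lemma sum_support_eq_of_subset {α M N : Type*} [Zero M] [AddCommMonoid N] (x : α →₀ M)
    {s : Finset α} (hs : x.support ⊆ s) (g : M → N) (hg : g 0 = 0) :
    ∑ i ∈ x.support, g (x i) = ∑ i ∈ s, g (x i) :=
  sum_subset hs fun i _ hi => by rw [Finsupp.notMem_support_iff.mp hi, hg]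

lemma ribe_eq_of_support_subset (x : ℕ →₀ ℝ) {s : Finset ℕ} (hs : x.support ⊆ s) :
    ribe x = ∑ i ∈ s, mulLogAbs (x i) - mulLogAbs (∑ i ∈ s, x i) := by
  rw [← sum_support_eq_of_subset x hs mulLogAbs (by simp [mulLogAbs]),
    ← sum_support_eq_of_subset x hs (fun t => t) rfl]
  rfl

lemma ribe_smul (r : ℝ) (x : ℕ →₀ ℝ) : ribe (r • x) = r * ribe x := by
  rw [ribe_eq_of_support_subset (r • x) Finsupp.support_smul, ribe_eq_of_support_subset x subset_rfl]
  simp only [Finsupp.smul_apply, smul_eq_mul, mulLogAbs_mul, ← mul_sum, sum_add_distrib, ← sum_mul]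
  ring

lemma abs_ribe_add_sub_sub_le (x y : ℕ →₀ ℝ) :
    |ribe (x + y) - ribe x - ribe y| ≤
      6 * ((∑ i ∈ x.support, |x i|) + (∑ i ∈ y.support, |y i|)) := by
  classical
  set u := x.support ∪ y.support
  have hx : x.support ⊆ u := subset_union_left
  have hy : y.support ⊆ u := subset_union_right
  set A := ∑ i ∈ u, x i
  set B := ∑ i ∈ u, y i
  have hA : |A| ≤ ∑ i ∈ x.support, |x i| :=
    (sum_support_eq_of_subset x hx _ abs_zero).symm ▸ abs_sum_le_sum_abs _ _
  have hB : |B| ≤ ∑ i ∈ y.support, |y i| :=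
    (sum_support_eq_of_subset y hy _ abs_zero).symm ▸ abs_sum_le_sum_abs _ _
  have hdefect : ribe (x + y) - ribe x - ribe y =
      ∑ i ∈ u, (mulLogAbs (x i + y i) - mulLogAbs (x i) - mulLogAbs (y i)) -
        (mulLogAbs (A + B) - mulLogAbs A - mulLogAbs B) := by
    rw [ribe_eq_of_support_subset (x + y) Finsupp.support_add, ribe_eq_of_support_subset x hx,
      ribe_eq_of_support_subset y hy]
    simp only [Finsupp.add_apply, sum_add_distrib, sum_sub_distrib]
    ring
  have hcoord : |∑ i ∈ u, (mulLogAbs (x i + y i) - mulLogAbs (x i) - mulLogAbs (y i))| ≤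
      3 * ((∑ i ∈ x.support, |x i|) + (∑ i ∈ y.support, |y i|)) := by
    rw [sum_support_eq_of_subset x hx _ abs_zero, sum_support_eq_of_subset y hy _ abs_zero,
      ← sum_add_distrib, mul_sum]
    exact (abs_sum_le_sum_abs _ _).trans (sum_le_sum fun i _ => abs_mulLogAbs_add_sub_sub_le _ _)
  rw [hdefect]
  linarith [abs_sub (∑ i ∈ u, (mulLogAbs (x i + y i) - mulLogAbs (x i) - mulLogAbs (y i)))
    (mulLogAbs (A + B) - mulLogAbs A - mulLogAbs B), abs_mulLogAbs_add_sub_sub_le A B]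

theorem ribe_quasilinear :
    (∀ (r : ℝ) (x : ℕ →₀ ℝ), ribe (r • x) = r * ribe x) ∧
    ∃ C : ℝ, ∀ x y : ℕ →₀ ℝ,
      |ribe (x + y) - ribe x - ribe y| ≤
        C * ((∑ i ∈ x.support, |x i|) + (∑ i ∈ y.support, |y i|)) :=
  ⟨ribe_smul, 6, abs_ribe_add_sub_sub_le⟩
end

section
/- With E the span of the unit vectors in ℓ_p(ℓ₁ⁿ) (1 < p < ∞) and F((xₙ)) = ∑ₙ cₙ F₀(xₙ) as above: if (cₙ log n) is unbounded, then there is no linear map T : E → ℝ and constant C with |T(x) − F(x)| ≤ C‖x‖ for all x ∈ E. (Hint: F(e_{i,n}) = 0 for all unit vectors while F((1/n)∑_{i=1}^n e_{i,n}) = −cₙ log n.) -/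
/-- The Ribe function on `ℓ₁ⁿ = (Fin n → ℝ, ‖·‖₁)`,
with the convention `0 * log 0 = 0` (note `Real.log 0 = 0`). -/
noncomputable def ribeFin {n : ℕ} (x : Fin n → ℝ) : ℝ :=
  (∑ i, x i * Real.log |x i|) - (∑ i, x i) * Real.log |∑ i, x i|

/-- The ℓ_p norm of a finitely supported element of `ℓ_p(ℓ₁ⁿ)`. -/
noncomputable def lpNorm (p : ℝ) (x : Π₀ n : ℕ, (Fin n → ℝ)) : ℝ :=
  (∑' n : ℕ, (∑ i, |x n i|) ^ p) ^ (1 / p)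

/-!
Every unit vector `e_{i,n}` lies on a coordinate axis of `ℓ₁ⁿ`, where the Ribe function vanishes,
so `|T e_{i,n}| ≤ C`, and by linearity `|T u_n| ≤ C` for the barycentre `u_n = (1/n) ∑ᵢ e_{i,n}`.
But `F u_n = -cₙ log n` while `‖u_n‖ = 1`, so `|cₙ log n| ≤ |T u_n - F u_n| + |T u_n| ≤ 2C`.
-/

open Finset

lemma ribeFin_zero {n : ℕ} : ribeFin (0 : Fin n → ℝ) = 0 := by
  simp [ribeFin]

lemma ribeFin_single {n : ℕ} (i : Fin n) (t : ℝ) : ribeFin (Pi.single i t : Fin n → ℝ) = 0 := by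
  have hlog : ∑ j, (Pi.single i t : Fin n → ℝ) j * Real.log |(Pi.single i t : Fin n → ℝ) j| =
      t * Real.log |t| := by
    rw [sum_eq_single i (fun j _ hj => by simp [hj]) (by simp)]
    simp
  rw [ribeFin, hlog, sum_pi_single', if_pos (mem_univ i), sub_self]

lemma ribeFin_const (n : ℕ) (t : ℝ) :
    ribeFin (fun _ : Fin n => t) = -(n * t * Real.log n) := by
  rcases eq_or_ne t 0 with rfl | ht
  · simp [ribeFin]
  rcases eq_or_ne (n : ℝ) 0 with hn | hn
  · simp [ribeFin, hn]
  simp only [ribeFin, sum_const, card_univ, Fintype.card_fin, nsmul_eq_mul, abs_mul, Nat.abs_cast,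
    Real.log_mul hn (abs_ne_zero.mpr ht)]
  ring

lemma ribeFin_const_inv (n : ℕ) : ribeFin (fun _ : Fin n => (n : ℝ)⁻¹) = -Real.log n := by
  rcases eq_or_ne (n : ℝ) 0 with hn | hn
  · simp [ribeFin_const, hn]
  · rw [ribeFin_const, mul_inv_cancel₀ hn, one_mul]

lemma tsum_apply_dfinsupp_single {ι M : Type*} [DecidableEq ι] [AddCommMonoid M]
    [TopologicalSpace M] {β : ι → Type*} [∀ i, Zero (β i)] (f : ∀ i, β i → M)
    (hf : ∀ i, f i 0 = 0) (n : ι) (v : β n) :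
    ∑' i, f i (DFinsupp.single n v i) = f n v := by
  rw [tsum_eq_single n fun i hi => by rw [DFinsupp.single_eq_of_ne hi, hf], DFinsupp.single_eq_same]

lemma lpNorm_single {p : ℝ} (hp : p ≠ 0) (n : ℕ) (v : Fin n → ℝ) :
    lpNorm p (DFinsupp.single n v) = ∑ i, |v i| := by
  rw [lpNorm, tsum_apply_dfinsupp_single (fun m (w : Fin m → ℝ) => (∑ i, |w i|) ^ p)
    (fun _ => by simp [Real.zero_rpow hp]), one_div, Real.rpow_rpow_inv (by positivity) hp]

lemma LinearMap.apply_dfinsupp_single_eq_sum {M : Type*} [AddCommMonoid M] [Module ℝ M]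
    (T : (Π₀ m : ℕ, (Fin m → ℝ)) →ₗ[ℝ] M) (n : ℕ) (v : Fin n → ℝ) :
    T (DFinsupp.single n v) = ∑ i, v i • T (DFinsupp.single n (Pi.single i 1)) := by
  conv_lhs => rw [← univ_sum_single v]
  simp_rw [← DFinsupp.lsingle_apply (R := ℝ), map_sum, ← map_smul, ← Pi.single_smul', smul_eq_mul,
    mul_one]

lemma abs_apply_dfinsupp_single_le (T : (Π₀ m : ℕ, (Fin m → ℝ)) →ₗ[ℝ] ℝ) {C : ℝ} (n : ℕ)
    (hT : ∀ i : Fin n, |T (DFinsupp.single n (Pi.single i 1))| ≤ C) (v : Fin n → ℝ) :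
    |T (DFinsupp.single n v)| ≤ (∑ i, |v i|) * C := by
  rw [T.apply_dfinsupp_single_eq_sum, sum_mul]
  refine (abs_sum_le_sum_abs _ _).trans (sum_le_sum fun i _ => ?_)
  rw [smul_eq_mul, abs_mul]
  exact mul_le_mul_of_nonneg_left (hT i) (abs_nonneg _)

lemma sum_abs_pi_single {n : ℕ} (i : Fin n) (t : ℝ) :
    ∑ j, |(Pi.single i t : Fin n → ℝ) j| = |t| := by
  rw [sum_eq_single i (fun j _ hj => by simp [hj]) (by simp)]
  simp

lemma sum_abs_const_inv_le_one (n : ℕ) : ∑ _i : Fin n, |(n : ℝ)⁻¹| ≤ 1 := by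
  rw [sum_const, card_univ, Fintype.card_fin, nsmul_eq_mul, abs_of_nonneg (by positivity)]
  exact mul_inv_le_one

lemma abs_mul_log_le_of_abs_sub_le {p : ℝ} (hp : p ≠ 0) {c : ℕ → ℝ}
    {T : (Π₀ n : ℕ, (Fin n → ℝ)) →ₗ[ℝ] ℝ} {C : ℝ}
    (hT : ∀ x : Π₀ n : ℕ, (Fin n → ℝ), |T x - ∑' n, c n * ribeFin (x n)| ≤ C * lpNorm p x)
    (n : ℕ) : |c n * Real.log n| ≤ 2 * C := by
  have hF (m : ℕ) (v : Fin m → ℝ) :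
      ∑' k, c k * ribeFin ((DFinsupp.single m v : Π₀ k : ℕ, (Fin k → ℝ)) k) = c m * ribeFin v :=
    tsum_apply_dfinsupp_single (β := fun k => Fin k → ℝ) (fun k w => c k * ribeFin w)
      (fun _ => by simp [ribeFin_zero]) m v
  have hunit (m : ℕ) (i : Fin m) : |T (DFinsupp.single m (Pi.single i 1))| ≤ C := by
    have h := hT (DFinsupp.single m (Pi.single i 1))
    rwa [hF, ribeFin_single, mul_zero, sub_zero, lpNorm_single hp, sum_abs_pi_single, abs_one,
      mul_one] at h
  have hC : 0 ≤ C := (abs_nonneg _).trans (hunit 1 0)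
  set u : Π₀ m : ℕ, (Fin m → ℝ) := DFinsupp.single n fun _ => (n : ℝ)⁻¹
  have hTu : |T u| ≤ C := (abs_apply_dfinsupp_single_le T n (hunit n) _).trans
    (mul_le_of_le_one_left hC (sum_abs_const_inv_le_one n))
  have hFu : |T u + c n * Real.log n| ≤ C := by
    have h := hT u
    rw [hF, ribeFin_const_inv, lpNorm_single hp, mul_neg, sub_neg_eq_add] at h
    exact h.trans (mul_le_of_le_one_right hC (sum_abs_const_inv_le_one n))
  calc |c n * Real.log n| = |(T u + c n * Real.log n) - T u| := by ring_nf
    _ ≤ |T u + c n * Real.log n| + |T u| := abs_sub _ _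
    _ ≤ 2 * C := by linarith

theorem kalton_peck_F_does_not_split
    (p : ℝ) (hp : 1 < p) (c : ℕ → ℝ)
    (hc : ¬ BddAbove (Set.range fun n : ℕ => |c n * Real.log n|)) :
    ¬ ∃ (T : (Π₀ n : ℕ, (Fin n → ℝ)) →ₗ[ℝ] ℝ) (C : ℝ),
        ∀ x : Π₀ n : ℕ, (Fin n → ℝ),
          |T x - ∑' n : ℕ, c n * ribeFin (x n)| ≤ C * lpNorm p x := by
  rintro ⟨T, C, hT⟩
  refine hc ⟨2 * C, ?_⟩
  rintro _ ⟨n, rfl⟩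
  exact abs_mul_log_le_of_abs_sub_le (zero_lt_one.trans hp).ne' hT n
end

section
/- Let (X, τ) be a topological vector space and suppose K(τ) = ⋂{f⁻¹(0) : f ∈ (X,τ)*} is complemented in X, with complement L. Let τ₁ be the product of the trivial (indiscrete) topology on K(τ) and the relative topology on L, and τ₂ the product of the relative topology on K(τ) and the trivial topology on L. Then τ₁ is nearly convex, τ₂ is trivial dual, and τ = sup(τ₁, τ₂). -/
open Filter Topology

/-!
A continuous functional on `(X, τ)` kills `K(τ) = range P`. A `τ₂`-continuous functional is also
`τ`-continuous, and it kills `ker P`, whose points are `τ₂`-inseparable from `0`; as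
`x = P x + (x - P x)`, it vanishes. A point outside the `τ₁`-closure of `0` has a nonzero
component `x - P x` in `L`, which lies outside `K(τ)` and is therefore detected by some `f`;
then `f ∘ (1 - P)` is `τ₁`-continuous. Finally `τ = sup(τ₁, τ₂)` because addition is continuous
and `x = (x - P x) + P x`.
-/

theorem inseparable_induced_of_eq {X Y : Type*} [t : TopologicalSpace Y] (g : X → Y) {x y : X}
    (h : g x = g y) : @Inseparable X (t.induced g) x y :=
  letI := t.induced g
  (IsInducing.induced g).inseparable_iff.mp (h ▸ Inseparable.rfl)

theorem nhds_induced_inf_nhds_induced_le_nhds_zero {X : Type*} [t : TopologicalSpace X]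
    [AddZeroClass X] [ContinuousAdd X] (A B : X → X) (hA : A 0 = 0) (hB : B 0 = 0)
    (hAB : ∀ x, A x + B x = x) :
    @nhds X (t.induced A) 0 ⊓ @nhds X (t.induced B) 0 ≤ 𝓝 0 := by
  rw [nhds_induced, nhds_induced, hA, hB]
  have h := (tendsto_comap.mono_left inf_le_left).add
    (tendsto_comap.mono_left (inf_le_right : comap A (𝓝 0) ⊓ comap B (𝓝 (0 : X)) ≤ _))
  simp only [hAB, add_zero] at h
  exact tendsto_id'.mp h

theorem eq_zero_of_mem_range_of_apply_eq_zero {M : Type*} [Zero M] {P : M → M}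
    (hP : ∀ x, P (P x) = P x) {z : M} (hz : z ∈ Set.range P) (hPz : P z = 0) : z = 0 := by
  obtain ⟨y, rfl⟩ := hz
  rw [← hP, hPz]

theorem apply_sub_apply_self_eq_zero {M F : Type*} [AddCommGroup M] [FunLike F M M]
    [AddMonoidHomClass F M M] {P : F} (hP : ∀ x, P (P x) = P x) (x : M) : P (x - P x) = 0 := by
  rw [map_sub, hP, sub_self]

section Decomposition

variable {R X : Type*} [Ring R] [TopologicalSpace R] [AddCommGroup X] [Module R X]
  [t : TopologicalSpace X] {P : X →L[R] X}

theorem exists_continuous_induced_sub_apply_ne_zero (hP : ∀ x, P (P x) = P x)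
    (hK : ∀ x, (∀ f : X →L[R] R, f x = 0) → x ∈ Set.range P) {x : X}
    (hx : x ∉ closure[t.induced fun x => x - P x] {0}) :
    ∃ f : X →ₗ[R] R, @Continuous X R (t.induced fun x => x - P x) _ f ∧ f x ≠ 0 := by
  have hQx : x - P x ≠ 0 := fun h => hx <|
    (@specializes_iff_mem_closure X (t.induced _) 0 x).mp
      (@Inseparable.specializes X (t.induced _) _ _
        (inseparable_induced_of_eq _ (by simpa using h.symm)))
  have hsep : ¬ ∀ g : X →L[R] R, g (x - P x) = 0 := fun h => hQx <|
    eq_zero_of_mem_range_of_apply_eq_zero hP (hK _ h) (apply_sub_apply_self_eq_zero hP x)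
  push Not at hsep
  obtain ⟨g, hg⟩ := hsep
  exact ⟨(g : X →ₗ[R] R).comp (LinearMap.id - (P : X →ₗ[R] X)),
    @Continuous.comp X X R (t.induced fun x => x - P x) t _ (fun x => x - P x) g g.continuous
      continuous_induced_dom, hg⟩

theorem linearMap_eq_zero_of_continuous_induced [T0Space R] (hP : ∀ x, P (P x) = P x)
    (hK : ∀ (f : X →L[R] R) x, f (P x) = 0) (f : X →ₗ[R] R)
    (hf : @Continuous X R (t.induced fun x => P x) _ f) : f = 0 := by
  have hcont : Continuous f := continuous_le_dom (continuous_iff_le_induced.mp P.continuous) hf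
  have hker (x : X) : f (x - P x) = 0 := by
    simpa using (@Inseparable.map X R (t.induced _) _ _ _ _
      (inseparable_induced_of_eq _ ((apply_sub_apply_self_eq_zero hP x).trans P.map_zero.symm))
      hf).eq
  ext x
  calc f x = f (P x) + f (x - P x) := by rw [← map_add, add_sub_cancel]
    _ = 0 := by rw [show f (P x) = 0 from hK ⟨f, hcont⟩ x, hker, add_zero]

end Decomposition

theorem klee_decomposition_of_complemented_kernel_general
    {X : Type*} [AddCommGroup X] [Module ℝ X]
    [t : TopologicalSpace X] [IsTopologicalAddGroup X]
    -- P is a continuous linear projection onto K(τ) = ∩ ker f :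
    (P : X →L[ℝ] X)
    (hproj : ∀ x, P (P x) = P x)
    (hrange : Set.range P = {x : X | ∀ f : X →L[ℝ] ℝ, f x = 0}) :
    -- τ₁ : product of the trivial topology on K(τ) and the relative topology
    -- on the complement L = ker P, i.e. the topology induced by x ↦ x - P x;
    -- τ₂ : product of the relative topology on K(τ) and the trivial topology
    -- on L, i.e. the topology induced by P.
    let τ₁ : TopologicalSpace X := t.induced (fun x => x - P x)
    let τ₂ : TopologicalSpace X := t.induced (fun x => P x)
    -- τ₁ is nearly convex :
    (∀ x : X, x ∉ @closure X τ₁ {0} →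
      ∃ f : X →ₗ[ℝ] ℝ, @Continuous X ℝ τ₁ _ f ∧ f x ≠ 0) ∧
    -- τ₂ is trivial dual :
    (∀ f : X →ₗ[ℝ] ℝ, @Continuous X ℝ τ₂ _ f → f = 0) ∧
    -- τ₁ and τ₂ are weaker than τ, and τ = sup(τ₁, τ₂) :
    t ≤ τ₁ ∧ t ≤ τ₂ ∧
    (∀ U ∈ @nhds X t 0, ∃ V ∈ @nhds X τ₁ 0, ∃ W ∈ @nhds X τ₂ 0, V ∩ W ⊆ U) := by
  dsimp only
  refine ⟨fun x hx => exists_continuous_induced_sub_apply_ne_zero hproj (fun _ h => hrange.ge h) hx,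
    linearMap_eq_zero_of_continuous_induced hproj (fun f x => hrange.le (Set.mem_range_self x) f),
    continuous_iff_le_induced.mp (continuous_id.sub P.continuous),
    continuous_iff_le_induced.mp P.continuous,
    fun U hU => mem_inf_iff_superset.mp <|
      nhds_induced_inf_nhds_induced_le_nhds_zero _ _ (by simp) P.map_zero
        (fun x => sub_add_cancel x (P x)) hU⟩

theorem klee_decomposition_of_complemented_kernel
    {X : Type*} [AddCommGroup X] [Module ℝ X]
    [t : TopologicalSpace X] [IsTopologicalAddGroup X] [ContinuousSMul ℝ X]
    -- P is a continuous linear projection onto K(τ) = ∩ ker f :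
    (P : X →L[ℝ] X)
    (hproj : ∀ x, P (P x) = P x)
    (hrange : Set.range P = {x : X | ∀ f : X →L[ℝ] ℝ, f x = 0}) :
    -- τ₁ : product of the trivial topology on K(τ) and the relative topology
    -- on the complement L = ker P, i.e. the topology induced by x ↦ x - P x;
    -- τ₂ : product of the relative topology on K(τ) and the trivial topology
    -- on L, i.e. the topology induced by P.
    let τ₁ : TopologicalSpace X := t.induced (fun x => x - P x)
    let τ₂ : TopologicalSpace X := t.induced (fun x => P x)
    -- τ₁ is nearly convex :
    (∀ x : X, x ∉ @closure X τ₁ {0} →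
      ∃ f : X →ₗ[ℝ] ℝ, @Continuous X ℝ τ₁ _ f ∧ f x ≠ 0) ∧
    -- τ₂ is trivial dual :
    (∀ f : X →ₗ[ℝ] ℝ, @Continuous X ℝ τ₂ _ f → f = 0) ∧
    -- τ₁ and τ₂ are weaker than τ, and τ = sup(τ₁, τ₂) :
    t ≤ τ₁ ∧ t ≤ τ₂ ∧
    (∀ U ∈ @nhds X t 0, ∃ V ∈ @nhds X τ₁ 0, ∃ W ∈ @nhds X τ₂ 0, V ∩ W ⊆ U) :=
  klee_decomposition_of_complemented_kernel_general (t := t) P hproj hrange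
end

section
/- For the Ribe function F₀ on ℓ₁⁰ and any two disjointly supported x, y ∈ ℓ₁⁰, |F₀(x+y) − F₀(x) − F₀(y)| = |s ln|s| + t ln|t| − (s+t) ln|s+t|| where s = ∑ᵢ xᵢ and t = ∑ᵢ yᵢ; in particular this is bounded by a constant times ‖x‖₁ + ‖y‖₁. -/
private lemma ribe_h_mul (r u : ℝ) (hr : 0 < r) :
    (r * u) * Real.log |r * u| = (r * u) * Real.log r + r * (u * Real.log |u|) := by
  rcases eq_or_ne u 0 with h | h
  · simp [h]
  · rw [abs_mul, Real.log_mul (by positivity) (by simpa [abs_ne_zero] using h),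
      abs_of_pos hr]
    ring

private lemma ribe_small (u : ℝ) (hu : |u| ≤ 1) : abs (u * Real.log |u|) ≤ 1 := by
  rcases eq_or_ne u 0 with h | h
  · simp [h]
  · have h1 : 0 < |u| := abs_pos.mpr h
    have h2 := Real.abs_log_mul_self_lt |u| h1 hu
    have : abs (u * Real.log |u|) = abs (Real.log |u| * |u|) := by
      rw [abs_mul, abs_mul, abs_abs, mul_comm]
    rw [this]
    exact h2.le

private lemma ribe_key (s t : ℝ) :
    abs (s * Real.log |s| + t * Real.log |t| - (s + t) * Real.log |s + t|)
      ≤ 3 * (|s| + |t|) := by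
  rcases eq_or_lt_of_le (by positivity : (0:ℝ) ≤ |s| + |t|) with h | hr
  · have hs : s = 0 := abs_eq_zero.mp (by linarith [abs_nonneg s, abs_nonneg t])
    have ht : t = 0 := abs_eq_zero.mp (by linarith [abs_nonneg s, abs_nonneg t])
    simp [hs, ht]
  · set r : ℝ := |s| + |t| with hrdef
    set a : ℝ := s / r with ha
    set b : ℝ := t / r with hb
    have hs : s = r * a := by rw [ha, mul_div_assoc', eq_div_iff hr.ne']; ring
    have ht : t = r * b := by rw [hb, mul_div_assoc', eq_div_iff hr.ne']; ring
    have hab : s + t = r * (a + b) := by rw [hs, ht]; ring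
    have haa : |a| ≤ 1 := by
      rw [ha, abs_div, abs_of_pos hr, div_le_one hr]
      simp [hrdef, abs_nonneg t]
    have hbb : |b| ≤ 1 := by
      rw [hb, abs_div, abs_of_pos hr, div_le_one hr]
      simp [hrdef, abs_nonneg s]
    have habb : |a + b| ≤ 1 := by
      calc |a + b| ≤ |a| + |b| := abs_add_le _ _
        _ ≤ 1 := by
          rw [ha, hb, abs_div, abs_div, abs_of_pos hr, ← add_div,
            div_le_one hr]
    have key : s * Real.log |s| + t * Real.log |t| - (s + t) * Real.log |s + t|
        = r * (a * Real.log |a| + b * Real.log |b| - (a + b) * Real.log |a + b|) := by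
      rw [hab, hs, ht, ribe_h_mul r a hr, ribe_h_mul r b hr, ribe_h_mul r (a + b) hr]
      ring
    rw [key, abs_mul, abs_of_pos hr, mul_comm (3:ℝ) r]
    refine mul_le_mul_of_nonneg_left ?_ hr.le
    calc abs (a * Real.log |a| + b * Real.log |b| - (a + b) * Real.log |a + b|)
        ≤ abs (a * Real.log |a| + b * Real.log |b|) + abs ((a + b) * Real.log |a + b|) :=
          abs_sub _ _
      _ ≤ abs (a * Real.log |a|) + abs (b * Real.log |b|) + abs ((a + b) * Real.log |a + b|) := by
          gcongr; exact abs_add_le _ _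
      _ ≤ 1 + 1 + 1 := by
          gcongr <;> [exact ribe_small a haa; exact ribe_small b hbb;
            exact ribe_small (a + b) habb]
      _ = 3 := by norm_num

theorem ribe_defect_disjoint_supports :
    ∃ C : ℝ, 0 < C ∧
      ∀ x y : ℕ →₀ ℝ, Disjoint x.support y.support →
        (|ribe (x + y) - ribe x - ribe y| =
          abs ((∑ i ∈ x.support, x i) * Real.log |∑ i ∈ x.support, x i| +
            (∑ i ∈ y.support, y i) * Real.log |∑ i ∈ y.support, y i| -
            ((∑ i ∈ x.support, x i) + (∑ i ∈ y.support, y i)) *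
              Real.log |(∑ i ∈ x.support, x i) + (∑ i ∈ y.support, y i)|)) ∧
        |ribe (x + y) - ribe x - ribe y| ≤
          C * ((∑ i ∈ x.support, |x i|) + (∑ i ∈ y.support, |y i|)) := by
  refine ⟨3, by norm_num, fun x y hdisj => ?_⟩
  have hsupp : (x + y).support = x.support ∪ y.support := Finsupp.support_add_eq hdisj
  have hx0 : ∀ i ∈ x.support, (x + y) i = x i := by
    intro i hi
    have : y i = 0 := Finsupp.notMem_support_iff.mp (Finset.disjoint_left.mp hdisj hi)
    simp [this]
  have hy0 : ∀ i ∈ y.support, (x + y) i = y i := by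
    intro i hi
    have : x i = 0 := Finsupp.notMem_support_iff.mp (Finset.disjoint_right.mp hdisj hi)
    simp [this]
  set S : ℝ := ∑ i ∈ x.support, x i with hS
  set T : ℝ := ∑ i ∈ y.support, y i with hT
  have hsum1 : (∑ i ∈ (x + y).support, (x + y) i * Real.log |(x + y) i|)
      = (∑ i ∈ x.support, x i * Real.log |x i|)
        + (∑ i ∈ y.support, y i * Real.log |y i|) := by
    rw [hsupp, Finset.sum_union hdisj]
    congr 1
    · exact Finset.sum_congr rfl fun i hi => by rw [hx0 i hi]
    · exact Finset.sum_congr rfl fun i hi => by rw [hy0 i hi]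
  have hsum2 : (∑ i ∈ (x + y).support, (x + y) i) = S + T := by
    rw [hsupp, Finset.sum_union hdisj, hS, hT]
    congr 1
    · exact Finset.sum_congr rfl hx0
    · exact Finset.sum_congr rfl hy0
  have hdef : ribe (x + y) - ribe x - ribe y
      = S * Real.log |S| + T * Real.log |T| - (S + T) * Real.log |S + T| := by
    unfold ribe
    rw [hsum1, hsum2, ← hS, ← hT]
    ring
  constructor
  · rw [hdef]
  · rw [hdef]
    calc abs (S * Real.log |S| + T * Real.log |T| - (S + T) * Real.log |S + T|)
        ≤ 3 * (|S| + |T|) := ribe_key S T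
      _ ≤ 3 * ((∑ i ∈ x.support, |x i|) + (∑ i ∈ y.support, |y i|)) := by
          gcongr
          · exact Finset.abs_sum_le_sum_abs _ _
          · exact Finset.abs_sum_le_sum_abs _ _
end
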